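/- arXiv:1311.3043 — 3 statements merged into one kernel-verified Lean document; each statement's English description precedes it below -/
import Mathlib

section
/- For |q| < 1, the series σ(q) = 1 + Σ_{n≥1} q^{n(n+1)/2}/((1+q)(1+q^2)⋯(1+q^n)) satisfies σ(q) = 1 + Σ_{n≥0} q^{n+1}(q-1)(q^2-1)⋯(q^n-1). -/
/-!
Write `A(t) = ∑ₙ (a; q)ₙ tⁿ`. The recursion `(a; q)ₙ₊₁ = (a; q)ₙ (1 - a qⁿ)` gives the functional
equation `(1 - t) A(t) = 1 - a t A(t q)`. Iterating it `N` times writes `A(t)` as the `N`-th partial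
sum of `∑ⱼ (-a t)ʲ q^(j choose 2) / (t; q)ⱼ₊₁` plus the remainder
`(-a t)ᴺ q^(N choose 2) / (t; q)_N · A(t qᴺ)`, which tends to `0` since `A` stays bounded on
`‖s‖ ≤ ‖t‖` while the factor `q^(N choose 2)` decays superexponentially. For `a = q`, `t = -q`
the two series, multiplied by `q`, are the two sides of the identity.
-/

open Finset Filter Topology

section

variable {R : Type*} [CommRing R]

/-- The `q`-Pochhammer symbol `(a; q)ₙ`. -/
def qPochhammer (a q : R) (n : ℕ) : R := ∏ k ∈ range n, (1 - a * q ^ k)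

@[simp]
lemma qPochhammer_zero (a q : R) : qPochhammer a q 0 = 1 := prod_range_zero _

lemma qPochhammer_succ (a q : R) (n : ℕ) :
    qPochhammer a q (n + 1) = qPochhammer a q n * (1 - a * q ^ n) :=
  prod_range_succ _ _

end

variable {𝕜 : Type*} [NormedField 𝕜] {a q t : 𝕜}

lemma norm_mul_pow_le (hq : ‖q‖ ≤ 1) (k : ℕ) : ‖t * q ^ k‖ ≤ ‖t‖ := by
  rw [norm_mul, norm_pow]
  exact mul_le_of_le_one_right (norm_nonneg t) (pow_le_one₀ (norm_nonneg q) hq)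

lemma one_sub_norm_le_norm_one_sub_mul_pow (hq : ‖q‖ ≤ 1) (k : ℕ) :
    1 - ‖t‖ ≤ ‖1 - t * q ^ k‖ := by
  linarith [norm_sub_norm_le (1 : 𝕜) (t * q ^ k), norm_one (α := 𝕜), norm_mul_pow_le (t := t) hq k]

lemma norm_qPochhammer_le (hq : ‖q‖ < 1) (n : ℕ) :
    ‖qPochhammer a q n‖ ≤ Real.exp (‖a‖ / (1 - ‖q‖)) := by
  calc ‖qPochhammer a q n‖ ≤ ∏ k ∈ range n, (1 + ‖a‖ * ‖q‖ ^ k) := by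
        rw [qPochhammer, norm_prod]
        refine prod_le_prod (fun _ _ ↦ norm_nonneg _) fun k _ ↦ ?_
        simpa using norm_sub_le (1 : 𝕜) (a * q ^ k)
    _ ≤ Real.exp (∑ k ∈ range n, ‖a‖ * ‖q‖ ^ k) :=
        Real.prod_one_add_le_exp_sum _ fun _ ↦ by positivity
    _ ≤ Real.exp (‖a‖ / (1 - ‖q‖)) := by
        rw [Real.exp_le_exp, ← mul_sum, div_eq_mul_inv]
        gcongr
        exact sum_le_hasSum _ (fun _ _ ↦ by positivity) (hasSum_geometric_of_lt_one (norm_nonneg q) hq)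

noncomputable def qPochhammerSeries (a q t : 𝕜) : 𝕜 := ∑' n, qPochhammer a q n * t ^ n

lemma norm_qPochhammer_mul_pow_le (hq : ‖q‖ < 1) (n : ℕ) :
    ‖qPochhammer a q n * t ^ n‖ ≤ Real.exp (‖a‖ / (1 - ‖q‖)) * ‖t‖ ^ n := by
  rw [norm_mul, norm_pow]
  exact mul_le_mul_of_nonneg_right (norm_qPochhammer_le hq n) (by positivity)

lemma norm_qPochhammerSeries_le (hq : ‖q‖ < 1) (ht : ‖t‖ < 1) :
    ‖qPochhammerSeries a q t‖ ≤ Real.exp (‖a‖ / (1 - ‖q‖)) / (1 - ‖t‖) :=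
  tsum_of_norm_bounded ((hasSum_geometric_of_lt_one (norm_nonneg t) ht).mul_left _)
    (norm_qPochhammer_mul_pow_le hq)

/-- `(-a t)ⁿ q^(n choose 2) / (t; q)ₙ`: the `n`-th term of the expansion of `A(t)` is this divided
by `1 - t qⁿ`, and the remainder after `n` terms is this times `A(t qⁿ)`. -/
def expansionCoeff (a q t : 𝕜) (n : ℕ) : 𝕜 := (-a * t) ^ n * q ^ n.choose 2 / qPochhammer t q n

lemma expansionCoeff_succ (n : ℕ) :
    expansionCoeff a q t (n + 1) =
      expansionCoeff a q t n * (-a * (t * q ^ n)) / (1 - t * q ^ n) := by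
  rw [expansionCoeff, expansionCoeff, qPochhammer_succ, Nat.choose_succ_succ',
    Nat.choose_one_right, div_mul_eq_mul_div, div_div]
  ring

lemma summable_norm_expansionCoeff (hq : ‖q‖ < 1) (ht : ‖t‖ < 1) :
    Summable fun n ↦ ‖expansionCoeff a q t n‖ := by
  have hratio : Tendsto (fun n ↦ ‖a‖ * ‖q‖ ^ n / (1 - ‖t‖)) atTop (𝓝 0) := by
    simpa using ((tendsto_pow_atTop_nhds_zero_of_lt_one (norm_nonneg q) hq).const_mul ‖a‖).div_const
      (1 - ‖t‖)
  refine summable_of_ratio_norm_eventually_le (r := 1 / 2) (by norm_num) ?_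
  filter_upwards [hratio.eventually_le_const (by norm_num : (0 : ℝ) < 1 / 2)] with n hn
  rw [norm_norm, norm_norm, expansionCoeff_succ, norm_div, norm_mul, mul_div_assoc,
    mul_comm (1 / 2 : ℝ)]
  refine mul_le_mul_of_nonneg_left (le_trans ?_ hn) (norm_nonneg _)
  rw [norm_mul, norm_neg, norm_mul, norm_pow]
  refine div_le_div₀ (by positivity) ?_ (sub_pos.mpr ht)
    (one_sub_norm_le_norm_one_sub_mul_pow hq.le n)
  exact mul_le_mul_of_nonneg_left (mul_le_of_le_one_left (by positivity) ht.le) (norm_nonneg a)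

variable [CompleteSpace 𝕜]

lemma summable_qPochhammer_mul_pow (hq : ‖q‖ < 1) (ht : ‖t‖ < 1) :
    Summable fun n ↦ qPochhammer a q n * t ^ n :=
  .of_norm_bounded ((summable_geometric_of_lt_one (norm_nonneg t) ht).mul_left _)
    (norm_qPochhammer_mul_pow_le hq)

lemma one_sub_mul_qPochhammerSeries (hq : ‖q‖ < 1) (ht : ‖t‖ < 1) :
    (1 - t) * qPochhammerSeries a q t = 1 - a * t * qPochhammerSeries a q (t * q) := by
  have htq : ‖t * q‖ < 1 := by simpa using (norm_mul_pow_le hq.le 1).trans_lt ht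
  have hsum := summable_qPochhammer_mul_pow (a := a) hq ht
  have hshift (n : ℕ) : qPochhammer a q (n + 1) * t ^ (n + 1) =
      t * (qPochhammer a q n * t ^ n) - a * t * (qPochhammer a q n * (t * q) ^ n) := by
    rw [qPochhammer_succ]; ring
  have hA : qPochhammerSeries a q t =
      1 + (t * qPochhammerSeries a q t - a * t * qPochhammerSeries a q (t * q)) := by
    conv_lhs => rw [qPochhammerSeries, hsum.tsum_eq_zero_add, tsum_congr hshift,
      (hsum.mul_left t).tsum_sub ((summable_qPochhammer_mul_pow hq htq).mul_left _),
      tsum_mul_left, tsum_mul_left, qPochhammer_zero, pow_zero, mul_one]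
    rfl
  linear_combination hA

lemma qPochhammerSeries_eq_sum_add (hq : ‖q‖ < 1) (ht : ‖t‖ < 1) (N : ℕ) :
    qPochhammerSeries a q t = ∑ j ∈ range N, expansionCoeff a q t j / (1 - t * q ^ j) +
      expansionCoeff a q t N * qPochhammerSeries a q (t * q ^ N) := by
  induction N with
  | zero => simp [expansionCoeff]
  | succ N ih =>
    have hs : ‖t * q ^ N‖ < 1 := (norm_mul_pow_le hq.le N).trans_lt ht
    have hne : 1 - t * q ^ N ≠ 0 :=
      norm_pos_iff.mp ((sub_pos.mpr ht).trans_le (one_sub_norm_le_norm_one_sub_mul_pow hq.le N))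
    have hfe := one_sub_mul_qPochhammerSeries (a := a) hq hs
    rw [ih, sum_range_succ, expansionCoeff_succ, pow_succ, ← mul_assoc]
    field_simp
    linear_combination expansionCoeff a q t N * hfe

theorem hasSum_qPochhammerSeries (hq : ‖q‖ < 1) (ht : ‖t‖ < 1) :
    HasSum (fun j ↦ (-a * t) ^ j * q ^ j.choose 2 / qPochhammer t q (j + 1))
      (qPochhammerSeries a q t) := by
  have hterm (j : ℕ) : (-a * t) ^ j * q ^ j.choose 2 / qPochhammer t q (j + 1) =
      expansionCoeff a q t j / (1 - t * q ^ j) := by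
    rw [qPochhammer_succ, ← div_div]; rfl
  have hsummable : Summable fun j ↦ expansionCoeff a q t j / (1 - t * q ^ j) := by
    refine .of_norm_bounded ((summable_norm_expansionCoeff (a := a) hq ht).div_const (1 - ‖t‖))
      fun j ↦ ?_
    rw [norm_div]
    exact div_le_div_of_nonneg_left (norm_nonneg _) (sub_pos.mpr ht)
      (one_sub_norm_le_norm_one_sub_mul_pow hq.le j)
  have hbounded : IsBoundedUnder (· ≤ ·) atTop
      (norm ∘ fun N ↦ qPochhammerSeries a q (t * q ^ N)) := by
    refine isBoundedUnder_of ⟨Real.exp (‖a‖ / (1 - ‖q‖)) / (1 - ‖t‖), fun N ↦ ?_⟩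
    have hs := norm_mul_pow_le (t := t) hq.le N
    exact (norm_qPochhammerSeries_le hq (hs.trans_lt ht)).trans
      (div_le_div_of_nonneg_left (by positivity) (sub_pos.mpr ht) (by linarith))
  have hcoeff : Tendsto (expansionCoeff a q t) atTop (𝓝 0) :=
    (summable_norm_expansionCoeff (a := a) hq ht).of_norm.tendsto_atTop_zero
  have hremainder := hcoeff.zero_mul_isBoundedUnder_le hbounded
  simp_rw [hterm]
  rw [hsummable.hasSum_iff_tendsto_nat]
  convert (tendsto_const_nhds (x := qPochhammerSeries a q t)).sub hremainder using 2 with N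
  · exact eq_sub_of_add_eq (qPochhammerSeries_eq_sum_add hq ht N).symm
  · rw [sub_zero]

theorem sigma_roots_of_unity_identity (q : ℂ) (hq : ‖q‖ < 1) :
    1 + ∑' n : ℕ, q ^ ((n + 1) * (n + 2) / 2) / ∏ k ∈ range (n + 1), (1 + q ^ (k + 1)) =
      1 + ∑' n : ℕ, q ^ (n + 1) * ∏ k ∈ range n, (q ^ (k + 1) - 1) := by
  have hexp (n : ℕ) : (n + 1) * (n + 2) / 2 = 1 + 2 * n + n.choose 2 := by
    rw [show (n + 1) * (n + 2) = (n + 2) * (n + 1 + 1 - 1) by rw [Nat.add_sub_cancel, mul_comm],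
      ← Nat.choose_two_right, Nat.choose_succ_succ', Nat.choose_succ_succ' n 1]
    simp only [Nat.choose_one_right, Nat.reduceAdd]
    omega
  have hlhs (n : ℕ) : q ^ ((n + 1) * (n + 2) / 2) / ∏ k ∈ range (n + 1), (1 + q ^ (k + 1)) =
      q * ((-q * -q) ^ n * q ^ n.choose 2 / qPochhammer (-q) q (n + 1)) := by
    rw [hexp, qPochhammer, mul_div_assoc']
    congr 1
    · ring
    · exact prod_congr rfl fun k _ ↦ by ring
  have hrhs (n : ℕ) : q ^ (n + 1) * ∏ k ∈ range n, (q ^ (k + 1) - 1) =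
      q * (qPochhammer q q n * (-q) ^ n) := by
    rw [prod_congr rfl fun k _ ↦ show q ^ (k + 1) - 1 = -(1 - q * q ^ k) by ring, prod_neg,
      card_range, qPochhammer]
    ring
  have hnegq : ‖-q‖ < 1 := by rwa [norm_neg]
  simp_rw [hlhs, hrhs, tsum_mul_left, (hasSum_qPochhammerSeries hq hnegq).tsum_eq]
  rfl
end

section
/- (Fine's transformation 6.3) For |q| < 1, |t| < 1, |b| < 1 with appropriate nonvanishing conditions, the basic hypergeometric series F(a,b;t) := Σ_{n≥0} ((aq;q)_n/(bq;q)_n) t^n satisfies F(a,b;t) = ((1−b)/(1−t)) F(at/b, t; b). -/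
open Finset Filter Topology

namespace FineAux

/-- The coefficient sequence of Fine's series. -/
noncomputable def A (q a b : ℂ) (n : ℕ) : ℂ :=
  (∏ k ∈ range n, (1 - a * q ^ (k + 1))) / ∏ k ∈ range n, (1 - b * q ^ (k + 1))

lemma denom_ne {q b : ℂ} (hbq : ∀ m : ℕ, b * q ^ (m + 1) ≠ 1) (n : ℕ) :
    ∏ k ∈ range n, (1 - b * q ^ (k + 1)) ≠ 0 := by
  refine prod_ne_zero_iff.2 fun k _ => sub_ne_zero.2 ?_
  exact fun h => hbq k h.symm

lemma A_rec (q a b : ℂ) (n : ℕ) :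
    A q a b (n + 1) = A q a b n * (1 - a * q ^ (n + 1)) / (1 - b * q ^ (n + 1)) := by
  unfold A
  rw [prod_range_succ, prod_range_succ, mul_div_mul_comm, mul_div_assoc]

lemma A_rec' (q a b : ℂ) (hbq : ∀ m : ℕ, b * q ^ (m + 1) ≠ 1) (n : ℕ) :
    A q a b (n + 1) * (1 - b * q ^ (n + 1)) = A q a b n * (1 - a * q ^ (n + 1)) := by
  have hne : (1 - b * q ^ (n + 1)) ≠ 0 := sub_ne_zero.2 fun h => hbq n h.symm
  rw [A_rec, div_mul_cancel₀ _ hne]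

lemma summable_of_ratio_tendsto {f g : ℕ → ℂ} {L : ℝ}
    (hL : L < 1) (hg : Tendsto (fun n => ‖g n‖) atTop (𝓝 L))
    (hrec : ∀ n, f (n + 1) = f n * g n) : Summable f := by
  have hr : (L + 1) / 2 < 1 := by linarith
  refine summable_of_ratio_norm_eventually_le hr ?_
  have hev : ∀ᶠ n in atTop, ‖g n‖ < (L + 1) / 2 :=
    hg.eventually (Filter.Tendsto.eventually_lt_const (by linarith) tendsto_id)
  filter_upwards [hev] with n hn
  rw [hrec n, norm_mul, mul_comm]
  exact mul_le_mul_of_nonneg_right hn.le (norm_nonneg _)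

lemma tendsto_sub_pow {q : ℂ} (c d : ℂ) (hq : ‖q‖ < 1) :
    Tendsto (fun n : ℕ => c - d * q ^ n) atTop (𝓝 c) := by
  have h := tendsto_pow_atTop_nhds_zero_of_norm_lt_one hq
  have := tendsto_const_nhds (x := c) (f := atTop (α := ℕ)) |>.sub
    ((tendsto_const_nhds (x := d)).mul h)
  simpa using this

lemma tendsto_sub_pow_succ {q : ℂ} (c d : ℂ) (hq : ‖q‖ < 1) :
    Tendsto (fun n : ℕ => c - d * q ^ (n + 1)) atTop (𝓝 c) := by
  have := tendsto_sub_pow c (d * q) hq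
  have heq : (fun n : ℕ => c - d * q * q ^ n) = (fun n : ℕ => c - d * q ^ (n + 1)) := by
    funext n; ring
  rwa [heq] at this

lemma summable_A {q b : ℂ} (a : ℂ) (hq : ‖q‖ < 1) (hbq : ∀ m : ℕ, b * q ^ (m + 1) ≠ 1)
    {t : ℂ} (ht : ‖t‖ < 1) :
    Summable (fun n => A q a b n * t ^ n) := by
  refine summable_of_ratio_tendsto (L := ‖t‖)
    (g := fun n => t * ((1 - a * q ^ (n + 1)) / (1 - b * q ^ (n + 1)))) ht ?_ ?_
  · have h := ((tendsto_const_nhds (x := t) (f := atTop (α := ℕ))).mul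
      ((tendsto_sub_pow_succ 1 a hq).div (tendsto_sub_pow_succ 1 b hq) one_ne_zero)).norm
    simpa using h
  · intro n
    rw [A_rec q a b n, pow_succ]
    ring

/-- Fine's functional equation. -/
lemma funct_eq (q a b : ℂ) (hq : ‖q‖ < 1) (hbq : ∀ m : ℕ, b * q ^ (m + 1) ≠ 1)
    {t : ℂ} (ht : ‖t‖ < 1) :
    (1 - t) * (∑' n, A q a b n * t ^ n)
      = (1 - b) + (b - a * t * q) * ∑' n, A q a b n * (t * q) ^ n := by
  have htq1 : ‖t * q‖ < 1 := by
    rw [norm_mul]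
    calc ‖t‖ * ‖q‖ ≤ ‖t‖ * 1 := mul_le_mul_of_nonneg_left hq.le (norm_nonneg _)
      _ = ‖t‖ := mul_one _
      _ < 1 := ht
  have hS := summable_A a hq hbq ht
  have hSq := summable_A a hq hbq htq1
  have key : (∑' n, (A q a b n * t ^ n - b * (A q a b n * (t * q) ^ n)))
      = (1 - b) + (t * ∑' n, A q a b n * t ^ n
          - a * t * q * ∑' n, A q a b n * (t * q) ^ n) := by
    rw [Summable.tsum_eq_zero_add (hS.sub (hSq.mul_left b))]
    have h0 : A q a b 0 * t ^ 0 - b * (A q a b 0 * (t * q) ^ 0) = 1 - b := by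
      simp [A]
    rw [h0]
    congr 1
    have hterm : ∀ n, A q a b (n + 1) * t ^ (n + 1) - b * (A q a b (n + 1) * (t * q) ^ (n + 1))
        = t * (A q a b n * t ^ n) - a * t * q * (A q a b n * (t * q) ^ n) := by
      intro n
      linear_combination (t ^ (n + 1)) * A_rec' q a b hbq n
    rw [tsum_congr hterm, Summable.tsum_sub (hS.mul_left t) (hSq.mul_left (a * t * q)),
      tsum_mul_left, tsum_mul_left]
  rw [Summable.tsum_sub hS (hSq.mul_left b), tsum_mul_left] at key
  linear_combination key

end FineAux

open FineAux

/-- Fine's basic hypergeometric series `F(a, b; t : q)`. -/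
noncomputable def fineF (q a b t : ℂ) : ℂ :=
  ∑' n : ℕ, ((∏ k ∈ range n, (1 - a * q ^ (k + 1))) /
    ∏ k ∈ range n, (1 - b * q ^ (k + 1))) * t ^ n

theorem fine_transformation_6_3 (q a b t : ℂ) (hq : ‖q‖ < 1) (ht : ‖t‖ < 1)
    (hb : ‖b‖ < 1) (hb0 : b ≠ 0)
    (hbq : ∀ m : ℕ, b * q ^ (m + 1) ≠ 1) (htq : ∀ m : ℕ, t * q ^ (m + 1) ≠ 1) :
    fineF q a b t = ((1 - b) / (1 - t)) * fineF q (a * t / b) t b := by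
  set S : ℂ → ℂ := fun u => ∑' n, A q a b n * u ^ n with hSdef
  set P : ℕ → ℂ := fun m => ∏ k ∈ range m, ((b - a * t * q ^ (k + 1)) / (1 - t * q ^ k))
    with hPdef
  have htqm : ∀ m : ℕ, 1 - t * q ^ m ≠ 0 := by
    intro m
    cases m with
    | zero =>
      simp only [pow_zero, mul_one]
      refine sub_ne_zero.2 fun h => ?_
      rw [← h] at ht; simp at ht
    | succ m => exact sub_ne_zero.2 fun h => htq m h.symm
  have hnorm_tq : ∀ N : ℕ, ‖t * q ^ N‖ < 1 := by
    intro N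
    rw [norm_mul, norm_pow]
    calc ‖t‖ * ‖q‖ ^ N ≤ ‖t‖ * 1 :=
          mul_le_mul_of_nonneg_left (pow_le_one₀ (norm_nonneg _) hq.le) (norm_nonneg _)
      _ = ‖t‖ := mul_one _
      _ < 1 := ht
  -- iteration of the functional equation
  have iter : ∀ N : ℕ, S t = (∑ m ∈ range N, (1 - b) * P m / (1 - t * q ^ m))
      + P N * S (t * q ^ N) := by
    intro N
    induction N with
    | zero => simp [hPdef]
    | succ N ih =>
      have feq := funct_eq q a b hq hbq (hnorm_tq N)
      rw [show t * q ^ N * q = t * q ^ (N + 1) by ring] at feq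
      have feq' : (1 - t * q ^ N) * S (t * q ^ N)
          = (1 - b) + (b - a * (t * q ^ N) * q) * S (t * q ^ (N + 1)) := feq
      rw [show a * (t * q ^ N) * q = a * t * q ^ (N + 1) by ring] at feq'
      have hSsub : S (t * q ^ N)
          = ((1 - b) + (b - a * t * q ^ (N + 1)) * S (t * q ^ (N + 1))) / (1 - t * q ^ N) := by
        rw [eq_div_iff (htqm N)]
        linear_combination feq'
      have hP1 : P (N + 1) = P N * ((b - a * t * q ^ (N + 1)) / (1 - t * q ^ N)) :=
        prod_range_succ _ _
      rw [ih, sum_range_succ, hP1, hSsub]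
      ring
  -- summability of P and of the partial-fraction series
  have htendP : Tendsto (fun m : ℕ => ‖(b - a * t * q ^ (m + 1)) / (1 - t * q ^ m)‖)
      atTop (𝓝 ‖b‖) := by
    have h := ((tendsto_sub_pow_succ b (a * t) hq).div (tendsto_sub_pow 1 t hq)
      one_ne_zero).norm
    simpa using h
  have hsumP : Summable P :=
    summable_of_ratio_tendsto hb htendP fun n => prod_range_succ _ _
  have hsumf : Summable (fun m => (1 - b) * P m / (1 - t * q ^ m)) := by
    refine summable_of_ratio_tendsto (L := ‖b‖)
      (g := fun m => (b - a * t * q ^ (m + 1)) / (1 - t * q ^ (m + 1))) hb ?_ ?_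
    · have h := ((tendsto_sub_pow_succ b (a * t) hq).div (tendsto_sub_pow_succ 1 t hq)
        one_ne_zero).norm
      simpa using h
    · intro m
      have hP1 : P (m + 1) = P m * ((b - a * t * q ^ (m + 1)) / (1 - t * q ^ m)) :=
        prod_range_succ _ _
      rw [hP1]
      ring
  -- the remainder tends to zero
  have hM : Summable (fun n => ‖A q a b n * t ^ n‖) :=
    summable_norm_iff.2 (summable_A a hq hbq ht)
  have hSbound : ∀ N : ℕ, ‖S (t * q ^ N)‖ ≤ ∑' n, ‖A q a b n * t ^ n‖ := by
    intro N
    have hsum : Summable (fun n => ‖A q a b n * (t * q ^ N) ^ n‖) :=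
      summable_norm_iff.2 (summable_A a hq hbq (hnorm_tq N))
    refine le_trans (norm_tsum_le_tsum_norm hsum) (Summable.tsum_le_tsum (fun n => ?_) hsum hM)
    rw [norm_mul, norm_mul]
    refine mul_le_mul_of_nonneg_left ?_ (norm_nonneg _)
    rw [norm_pow, norm_pow]
    refine pow_le_pow_left₀ (norm_nonneg _) ?_ n
    rw [norm_mul, norm_pow]
    calc ‖t‖ * ‖q‖ ^ N ≤ ‖t‖ * 1 :=
          mul_le_mul_of_nonneg_left (pow_le_one₀ (norm_nonneg _) hq.le) (norm_nonneg _)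
      _ = ‖t‖ := mul_one _
  have hrem : Tendsto (fun N => P N * S (t * q ^ N)) atTop (𝓝 0) := by
    refine squeeze_zero_norm (a := fun N => ‖P N‖ * ∑' n, ‖A q a b n * t ^ n‖) ?_ ?_
    · intro N
      rw [norm_mul]
      exact mul_le_mul_of_nonneg_left (hSbound N) (norm_nonneg _)
    · have h := (hsumP.tendsto_atTop_zero.norm).mul_const (∑' n, ‖A q a b n * t ^ n‖)
      simpa using h
  -- partial sums converge to S t
  have hps : Tendsto (fun N => ∑ m ∈ range N, (1 - b) * P m / (1 - t * q ^ m))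
      atTop (𝓝 (S t)) := by
    have heq : (fun N => ∑ m ∈ range N, (1 - b) * P m / (1 - t * q ^ m))
        = fun N => S t - P N * S (t * q ^ N) := by
      funext N
      rw [iter N]; ring
    rw [heq]
    have h := (tendsto_const_nhds (x := S t) (f := atTop (α := ℕ))).sub hrem
    simpa using h
  have htsum : (∑' m, (1 - b) * P m / (1 - t * q ^ m)) = S t :=
    tendsto_nhds_unique hsumf.hasSum.tendsto_sum_nat hps
  -- identify the terms with those of the RHS series
  have hterm : ∀ m : ℕ, (1 - b) * P m / (1 - t * q ^ m)
      = (1 - b) / (1 - t) * (((∏ k ∈ range m, (1 - a * t / b * q ^ (k + 1))) /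
          ∏ k ∈ range m, (1 - t * q ^ (k + 1))) * b ^ m) := by
    intro m
    have h1 : ∏ k ∈ range m, (b - a * t * q ^ (k + 1))
        = b ^ m * ∏ k ∈ range m, (1 - a * t / b * q ^ (k + 1)) := by
      have hbm : b ^ m * ∏ k ∈ range m, (1 - a * t / b * q ^ (k + 1))
          = ∏ k ∈ range m, (b * (1 - a * t / b * q ^ (k + 1))) := by
        rw [prod_mul_distrib, prod_const, card_range]
      rw [hbm]
      refine prod_congr rfl fun k _ => ?_
      field_simp
    have h2 : (∏ k ∈ range m, (1 - t * q ^ k)) * (1 - t * q ^ m)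
        = (1 - t) * ∏ k ∈ range m, (1 - t * q ^ (k + 1)) := by
      rw [← prod_range_succ (f := fun k => 1 - t * q ^ k), prod_range_succ']
      simp [mul_comm]
    have hPm : P m = (b ^ m * ∏ k ∈ range m, (1 - a * t / b * q ^ (k + 1))) /
        ∏ k ∈ range m, (1 - t * q ^ k) := by
      show (∏ k ∈ range m, ((b - a * t * q ^ (k + 1)) / (1 - t * q ^ k))) = _
      rw [prod_div_distrib, h1]
    rw [hPm, mul_div_assoc', div_div, h2]
    have hD1 : (∏ k ∈ range m, (1 - t * q ^ (k + 1))) ≠ 0 :=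
      prod_ne_zero_iff.2 fun k _ => htqm (k + 1)
    have ht1 : (1 : ℂ) - t ≠ 0 := by simpa using htqm 0
    field_simp
  -- conclude
  have hL : fineF q a b t = S t := rfl
  have hR : fineF q (a * t / b) t b
      = ∑' m, ((∏ k ∈ range m, (1 - a * t / b * q ^ (k + 1))) /
          ∏ k ∈ range m, (1 - t * q ^ (k + 1))) * b ^ m := rfl
  rw [hL, ← htsum, tsum_congr hterm, tsum_mul_left, hR]
end

section
/- For the group Γ₀(4) of integer matrices [[a,b],[c,d]] with ad−bc=1 and 4 | c, the three matrices A = [[1,1],[0,1]], B = [[3,−1],[4,−1]], C = [[−1,0],[0,−1]] generate Γ₀(4). -/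
/-!
Γ₀(4) contains `T = [[1,1],[0,1]]` and `V = [[1,0],[4,1]] = B⁻¹ T C`, which act on the first column
`(a, c)` of `g` by `a ↦ a ± c` and `c ↦ c ± 4a`. For `g ∈ Γ₀(4)` the entry `a` is odd while
`4 ∣ c`, so `|c| ≠ 2|a|`; if `|c| < 2|a|` one of `T^{±1}` shrinks `|a|`, otherwise one of `V^{±1}`
shrinks `|c|`. Descending on `|a| + |c|` reaches `c = 0`, i.e. `g = ±Tⁿ`.
-/

open Matrix Matrix.SpecialLinearGroup MatrixGroups ModularGroup CongruenceSubgroup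

lemma abs_sub_lt_or_abs_add_lt {α : Type*} [CommRing α] [LinearOrder α] [IsStrictOrderedRing α]
    {x y : α} (hy : y ≠ 0) (hyx : |y| < 2 * |x|) : |x - y| < |x| ∨ |x + y| < |x| := by
  simp only [abs_lt]
  rcases hy.lt_or_gt with hy | hy <;> rcases le_total 0 x with hx | hx <;>
    simp only [abs_of_nonneg, abs_of_nonpos, abs_of_neg, abs_of_pos, hx, hy] at hyx ⊢ <;>
    first | (left; constructor <;> linarith) | (right; constructor <;> linarith)

namespace ModularGroup

lemma T_mul_apply_zero_zero (g : SL(2, ℤ)) : (T * g) 0 0 = g 0 0 + g 1 0 := by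
  simp [coe_mul, mul_apply, Fin.sum_univ_two]

lemma T_inv_mul_apply_zero_zero (g : SL(2, ℤ)) : (T⁻¹ * g) 0 0 = g 0 0 - g 1 0 := by
  simp [coe_mul, mul_apply, Fin.sum_univ_two, sub_eq_add_neg]

lemma eq_T_zpow_or_eq_neg_T_zpow_of_apply_one_zero_eq_zero {g : SL(2, ℤ)} (hc : g 1 0 = 0) :
    g = T ^ g 0 1 ∨ g = -T ^ (-g 0 1) := by
  have had : g 0 0 * g 1 1 = 1 := by
    have := g.det_coe; rw [det_fin_two, hc] at this; linarith
  rcases Int.eq_one_or_neg_one_of_mul_eq_one' had with ⟨ha, hd⟩ | ⟨ha, hd⟩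
  · left
    ext i j; fin_cases i <;> fin_cases j <;> simp [ha, hc, hd, coe_T_zpow]
  · right
    ext i j; fin_cases i <;> fin_cases j <;> simp [ha, hc, hd, coe_T_zpow]

end ModularGroup

namespace CongruenceSubgroup

lemma odd_apply_zero_zero_of_mem_Gamma0 {N : ℕ} (hN : 2 ∣ N) {g : SL(2, ℤ)}
    (hg : g ∈ Gamma0 N) : Odd (g 0 0) := by
  have hc : (2 : ℤ) ∣ g 1 0 :=
    (Int.natCast_dvd_natCast.mpr hN).trans ((ZMod.intCast_zmod_eq_zero_iff_dvd _ _).mp hg)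
  have hdet : g 0 0 * g 1 1 = 1 + g 0 1 * g 1 0 := by
    have := g.det_coe; rw [det_fin_two] at this; linarith
  have : Odd (g 0 0 * g 1 1) := by
    rw [hdet]; exact (even_iff_two_dvd.mpr (dvd_mul_of_dvd_right hc _)).one_add
  exact (Int.odd_mul.mp this).1

end CongruenceSubgroup

namespace CongruenceSubgroup.Gamma0Four

def B : SL(2, ℤ) := ⟨!![3, -1; 4, -1], by decide⟩

def V : SL(2, ℤ) := ⟨!![1, 0; 4, 1], by decide⟩

lemma V_eq : V = B⁻¹ * (T * -1) := by
  rw [eq_inv_mul_iff_mul_eq]; decide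

lemma coe_V : (V : Matrix (Fin 2) (Fin 2) ℤ) = !![1, 0; 4, 1] := rfl

lemma coe_V_inv : ((V⁻¹ : SL(2, ℤ)) : Matrix (Fin 2) (Fin 2) ℤ) = !![1, 0; -4, 1] := by
  simp [coe_inv, coe_V, adjugate_fin_two]

lemma V_mul_apply_zero_zero (g : SL(2, ℤ)) : (V * g) 0 0 = g 0 0 := by
  simp [coe_mul, coe_V, mul_apply, Fin.sum_univ_two]

lemma V_mul_apply_one_zero (g : SL(2, ℤ)) : (V * g) 1 0 = g 1 0 + 4 * g 0 0 := by
  simp [coe_mul, coe_V, mul_apply, Fin.sum_univ_two, add_comm]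

lemma V_inv_mul_apply_zero_zero (g : SL(2, ℤ)) : (V⁻¹ * g) 0 0 = g 0 0 := by
  rw [coe_mul, coe_V_inv]
  simp [mul_apply, Fin.sum_univ_two]

lemma V_inv_mul_apply_one_zero (g : SL(2, ℤ)) : (V⁻¹ * g) 1 0 = g 1 0 - 4 * g 0 0 := by
  rw [coe_mul, coe_V_inv]
  simp [mul_apply, Fin.sum_univ_two]; ring

lemma closure_le_Gamma0_four : Subgroup.closure {T, B, -1} ≤ Gamma0 4 := by
  rw [Subgroup.closure_le]
  rintro x (rfl | rfl | rfl) <;> exact Gamma0_mem.mpr (by decide)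

lemma exists_mul_abs_add_abs_lt {g : SL(2, ℤ)} (hg : g ∈ Gamma0 4) (hc : g 1 0 ≠ 0) :
    ∃ h ∈ ({T, T⁻¹, V, V⁻¹} : Set SL(2, ℤ)),
      |(h * g) 0 0| + |(h * g) 1 0| < |g 0 0| + |g 1 0| := by
  have ha : Odd (g 0 0) := odd_apply_zero_zero_of_mem_Gamma0 (by norm_num) hg
  have h4 : (4 : ℤ) ∣ g 1 0 := (ZMod.intCast_zmod_eq_zero_iff_dvd _ _).mp hg
  have hne : |g 1 0| ≠ 2 * |g 0 0| := by
    obtain ⟨k, hk⟩ := ha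
    obtain ⟨m, hm⟩ := h4
    rcases abs_cases (g 0 0) with ⟨h1, -⟩ | ⟨h1, -⟩ <;>
      rcases abs_cases (g 1 0) with ⟨h2, -⟩ | ⟨h2, -⟩ <;> omega
  rcases hne.lt_or_gt with hlt | hgt
  · rcases abs_sub_lt_or_abs_add_lt hc hlt with h | h
    · refine ⟨T⁻¹, by simp, ?_⟩
      rw [T_inv_mul_apply_zero_zero, congrFun (T_inv_mul_apply_one g) 0]
      linarith
    · refine ⟨T, by simp, ?_⟩
      rw [T_mul_apply_zero_zero, congrFun (T_mul_apply_one g) 0]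
      linarith
  · have h4a : 4 * g 0 0 ≠ 0 := mul_ne_zero four_ne_zero fun h ↦ by simp [h] at ha
    have hlt : |4 * g 0 0| < 2 * |g 1 0| := by rw [abs_mul]; norm_num; linarith
    rcases abs_sub_lt_or_abs_add_lt h4a hlt with h | h
    · refine ⟨V⁻¹, by simp, ?_⟩
      rw [V_inv_mul_apply_zero_zero, V_inv_mul_apply_one_zero]
      linarith
    · refine ⟨V, by simp, ?_⟩
      rw [V_mul_apply_zero_zero, V_mul_apply_one_zero]
      linarith

lemma V_mem_closure : V ∈ Subgroup.closure {T, B, -1} := by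
  rw [V_eq]
  refine mul_mem (inv_mem (Subgroup.subset_closure ?_))
    (mul_mem (Subgroup.subset_closure ?_) (Subgroup.subset_closure ?_)) <;> simp

lemma mem_closure_of_mem_Gamma0_four {g : SL(2, ℤ)} (hg : g ∈ Gamma0 4) :
    g ∈ Subgroup.closure {T, B, -1} := by
  have hT : T ∈ Subgroup.closure {T, B, -1} := Subgroup.subset_closure (by simp)
  have h_neg_one : -1 ∈ Subgroup.closure {T, B, -1} := Subgroup.subset_closure (by simp)
  by_cases hc : g 1 0 = 0
  · rcases eq_T_zpow_or_eq_neg_T_zpow_of_apply_one_zero_eq_zero hc with hg' | hg' <;> rw [hg']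
    · exact zpow_mem hT _
    · rw [← neg_one_mul (T ^ _)]
      exact mul_mem h_neg_one (zpow_mem hT _)
  · obtain ⟨h, hh, hlt⟩ := exists_mul_abs_add_abs_lt hg hc
    have hh_mem : h ∈ Subgroup.closure {T, B, -1} := by
      rcases hh with rfl | rfl | rfl | rfl
      exacts [hT, inv_mem hT, V_mem_closure, inv_mem V_mem_closure]
    have := mem_closure_of_mem_Gamma0_four (mul_mem (closure_le_Gamma0_four hh_mem) hg)
    simpa using mul_mem (inv_mem hh_mem) this
termination_by (g 0 0).natAbs + (g 1 0).natAbs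
decreasing_by zify; simpa using hlt

end CongruenceSubgroup.Gamma0Four

theorem gamma0_four_generators :
    Subgroup.closure
        ({⟨!![1, 1; 0, 1], by decide⟩, ⟨!![3, -1; 4, -1], by decide⟩,
          ⟨!![-1, 0; 0, -1], by decide⟩} :
          Set (Matrix.SpecialLinearGroup (Fin 2) ℤ)) =
      CongruenceSubgroup.Gamma0 4 := by
  have h_neg_one : (-1 : SL(2, ℤ)) = ⟨!![-1, 0; 0, -1], by decide⟩ :=
    Subtype.ext (by decide)
  change Subgroup.closure {T, Gamma0Four.B, _} = _
  rw [← h_neg_one]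
  exact le_antisymm Gamma0Four.closure_le_Gamma0_four
    fun g hg ↦ Gamma0Four.mem_closure_of_mem_Gamma0_four hg
end
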